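/- If w is a scalar Muckenhoupt A₂ weight on 𝕋 with A₂-constant at most M, then there is a function α = α_M : [0,1) → (0,∞) with α(t) → 0 as t → 1, depending only on M, such that (1-|λ|²)·w(0)/w(λ) ≤ α(|λ|) for all λ ∈ 𝔻, where w(λ) denotes the Poisson extension of w at λ. -/

import Mathlib

open MeasureTheory Real Filter
open scoped ComplexOrder

/-- Average of a scalar function over the arc of length `ℓ` starting at `a`. -/
noncomputable def avg (f : ℝ → ℝ) (a ℓ : ℝ) : ℝ := (∫ t in a..(a + ℓ), f t) / ℓ

/-- Entrywise average of a matrix-valued function over the arc `[a, a+ℓ]`. -/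
noncomputable def mavg {d : ℕ} (W : ℝ → Matrix (Fin d) (Fin d) ℂ) (a ℓ : ℝ) :
    Matrix (Fin d) (Fin d) ℂ :=
  Matrix.of fun i j => (∫ t in a..(a + ℓ), W t i j) / (ℓ : ℂ)

/-- Poisson kernel of the unit disk at `l ∈ 𝔻`, evaluated at `e^{it}`. -/
noncomputable def poissonKer (l : ℂ) (t : ℝ) : ℝ :=
  (1 - ‖l‖ ^ 2) / ‖1 - (starRingEnd ℂ) l * Complex.exp (t * Complex.I)‖ ^ 2

/-- Harmonic (Poisson) extension of a scalar function on the circle at `l ∈ 𝔻`. -/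
noncomputable def pext (f : ℝ → ℝ) (l : ℂ) : ℝ :=
  (2 * π)⁻¹ * ∫ t in (0:ℝ)..(2 * π), f t * poissonKer l t

/-- Entrywise harmonic (Poisson) extension of a matrix-valued function. -/
noncomputable def mpext {d : ℕ} (W : ℝ → Matrix (Fin d) (Fin d) ℂ) (l : ℂ) :
    Matrix (Fin d) (Fin d) ℂ :=
  Matrix.of fun i j => (2 * π : ℂ)⁻¹ * ∫ t in (0:ℝ)..(2 * π), W t i j * (poissonKer l t : ℂ)

/-- Operator (`ℓ² → ℓ²`) norm of a matrix. -/
noncomputable def opNorm {d : ℕ} (A : Matrix (Fin d) (Fin d) ℂ) : ℝ :=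
  ‖(Matrix.toEuclideanCLM (𝕜 := ℂ) A : EuclideanSpace ℂ (Fin d) →L[ℂ] EuclideanSpace ℂ (Fin d))‖

/-- Real part of the quadratic form `⟨A e, e⟩`. -/
noncomputable def qf {d : ℕ} (A : Matrix (Fin d) (Fin d) ℂ) (e : Fin d → ℂ) : ℝ :=
  (dotProduct (star e) (A.mulVec e)).re

/-- The filter of arcs `(a, ℓ)` (left endpoint, length) with `ℓ → 0⁺`. -/
def arcFilter : Filter (ℝ × ℝ) := Filter.comap Prod.snd (nhdsWithin 0 (Set.Ioi 0))

/-- The filter of points of the open unit disk with `|λ| → 1`. -/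
noncomputable def bdyFilter : Filter ℂ :=
  Filter.comap (fun z : ℂ => ‖z‖) (nhdsWithin 1 (Set.Iio 1)) ⊓ Filter.principal {z : ℂ | ‖z‖ < 1}

/-- `φ` has vanishing mean oscillation: the mean oscillation over arcs tends to `0`
uniformly as the length of the arc tends to `0`. -/
def IsVMO (φ : ℝ → ℝ) : Prop :=
  Filter.Tendsto (fun p : ℝ × ℝ => avg (fun t => |φ t - avg φ p.1 p.2|) p.1 p.2)
    arcFilter (nhds 0)


section Stmt9Aux

lemma absId (l : ℂ) (t : ℝ) :
    ‖1 - (starRingEnd ℂ) l * Complex.exp (t * Complex.I)‖ ^ 2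
      = 1 - 2 * ‖l‖ * Real.cos (t - Complex.arg l) + ‖l‖ ^ 2 := by
  have h1 : (starRingEnd ℂ) l * Complex.exp (t * Complex.I)
      = (‖l‖ : ℂ) * Complex.exp ((t - Complex.arg l : ℝ) * Complex.I) := by
    conv_lhs => rw [← Complex.norm_mul_exp_arg_mul_I l]
    rw [map_mul, Complex.conj_ofReal, ← Complex.exp_conj, map_mul, Complex.conj_ofReal,
      Complex.conj_I, mul_assoc, ← Complex.exp_add]
    congr 1
    push_cast
    ring
  rw [h1, ← Complex.normSq_eq_norm_sq]
  set s := t - Complex.arg l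
  have h2 : ((1:ℂ) - (‖l‖ : ℂ) * Complex.exp ((s:ℝ) * Complex.I)).re
      = 1 - ‖l‖ * Real.cos s := by
    simp [Complex.exp_ofReal_mul_I_re]
  have h3 : ((1:ℂ) - (‖l‖ : ℂ) * Complex.exp ((s:ℝ) * Complex.I)).im
      = -(‖l‖ * Real.sin s) := by
    simp [Complex.exp_ofReal_mul_I_im]
  rw [Complex.normSq_apply, h2, h3]
  nlinarith [Real.sin_sq_add_cos_sq s]

lemma Dpos {r : ℝ} (h0 : 0 ≤ r) (h1 : r < 1) (s : ℝ) :
    0 < 1 - 2 * r * Real.cos s + r ^ 2 := by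
  nlinarith [Real.cos_le_one s, sq_nonneg (1 - r)]

lemma poissonKer_eq (l : ℂ) (t : ℝ) :
    poissonKer l t = (1 - ‖l‖ ^ 2) /
      (1 - 2 * ‖l‖ * Real.cos (t - Complex.arg l) + ‖l‖ ^ 2) := by
  rw [poissonKer, absId]

lemma poissonKer_pos {l : ℂ} (hl : ‖l‖ < 1) (t : ℝ) : 0 < poissonKer l t := by
  rw [poissonKer_eq]
  have h0 : (0:ℝ) ≤ ‖l‖ := norm_nonneg l
  exact div_pos (by nlinarith) (Dpos h0 hl _)

lemma poissonKer_continuous {l : ℂ} (hl : ‖l‖ < 1) :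
    Continuous (poissonKer l) := by
  have h0 : (0:ℝ) ≤ ‖l‖ := norm_nonneg l
  have : (poissonKer l) = fun t => (1 - ‖l‖ ^ 2) /
      (1 - 2 * ‖l‖ * Real.cos (t - Complex.arg l) + ‖l‖ ^ 2) := by
    funext t; exact poissonKer_eq l t
  rw [this]
  apply Continuous.div continuous_const
  · fun_prop
  · intro t; exact (Dpos h0 hl _).ne'

lemma poissonKer_periodic (l : ℂ) : Function.Periodic (poissonKer l) (2 * π) := by
  intro t
  unfold poissonKer
  congr 3
  push_cast
  rw [add_mul, Complex.exp_add]
  norm_num [Complex.exp_two_pi_mul_I]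

/-- Weighted Cauchy–Schwarz via AM–GM. -/
lemma CSw (w P : ℝ → ℝ) (hw : ∀ t, 0 < w t) (a b : ℝ) (hab : a ≤ b)
    (hiP : IntervalIntegrable P volume a b)
    (hiwP : IntervalIntegrable (fun t => w t * P t) volume a b)
    (hivP : IntervalIntegrable (fun t => (w t)⁻¹ * P t) volume a b)
    (hA : 0 < ∫ t in a..b, w t * P t) (hB : 0 < ∫ t in a..b, (w t)⁻¹ * P t)
    (hP : ∀ t, 0 ≤ P t) :
    (∫ t in a..b, P t) ^ 2 ≤
      (∫ t in a..b, w t * P t) * (∫ t in a..b, (w t)⁻¹ * P t) := by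
  set A := ∫ t in a..b, w t * P t
  set B := ∫ t in a..b, (w t)⁻¹ * P t
  set c := Real.sqrt (B / A) with hc
  have hcpos : 0 < c := Real.sqrt_pos.2 (div_pos hB hA)
  have hpt : ∀ t, P t ≤ (c * (w t * P t) + c⁻¹ * ((w t)⁻¹ * P t)) / 2 := by
    intro t
    have hwt := hw t
    have h2 : 2 ≤ c * w t + c⁻¹ * (w t)⁻¹ := by
      have hx : 0 < c * w t := mul_pos hcpos hwt
      have he : c⁻¹ * (w t)⁻¹ = (c * w t)⁻¹ := by rw [mul_inv]
      rw [he]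
      have h1 := mul_inv_cancel₀ hx.ne'
      nlinarith [sq_nonneg (c * w t - 1), mul_pos hx (inv_pos.2 hx)]
    nlinarith [hP t]
  have hmono : (∫ t in a..b, P t) ≤ (c * A + c⁻¹ * B) / 2 := by
    have : (∫ t in a..b, (c * (w t * P t) + c⁻¹ * ((w t)⁻¹ * P t)) / 2)
        = (c * A + c⁻¹ * B) / 2 := by
      rw [intervalIntegral.integral_div, intervalIntegral.integral_add
        ((hiwP.const_mul c)) ((hivP.const_mul c⁻¹)),
        intervalIntegral.integral_const_mul, intervalIntegral.integral_const_mul]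
    rw [← this]
    exact intervalIntegral.integral_mono_on hab hiP
      (((hiwP.const_mul c).add (hivP.const_mul c⁻¹)).div_const 2)
      (fun t _ => hpt t)
  have hcA : c * A = Real.sqrt (A * B) := by
    rw [hc, Real.sqrt_div hB.le, div_mul_eq_mul_div, mul_div_assoc, Real.div_sqrt,
      ← Real.sqrt_mul hB.le, mul_comm B A]
  have hcB : c⁻¹ * B = Real.sqrt (A * B) := by
    rw [hc, ← Real.sqrt_inv, inv_div, Real.sqrt_div hA.le, div_mul_eq_mul_div, mul_div_assoc,
      Real.div_sqrt, ← Real.sqrt_mul hA.le]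
  have hfin : (∫ t in a..b, P t) ≤ Real.sqrt (A * B) := by
    rw [hcA, hcB] at hmono
    linarith
  have hnn : 0 ≤ ∫ t in a..b, P t :=
    intervalIntegral.integral_nonneg hab (fun u _ => hP u)
  calc (∫ t in a..b, P t) ^ 2 ≤ Real.sqrt (A * B) ^ 2 := by
        exact pow_le_pow_left₀ hnn hfin 2
    _ = A * B := Real.sq_sqrt (by positivity)

lemma CSint (w : ℝ → ℝ) (hw : ∀ t, 0 < w t) (a b : ℝ) (hab : a < b)
    (hiw : IntervalIntegrable w volume a b)
    (hiv : IntervalIntegrable (fun t => (w t)⁻¹) volume a b) :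
    (b - a) ^ 2 ≤ (∫ t in a..b, w t) * (∫ t in a..b, (w t)⁻¹) := by
  have h1 : 0 < ∫ t in a..b, w t :=
    intervalIntegral.intervalIntegral_pos_of_pos hiw hw hab
  have h2 : 0 < ∫ t in a..b, (w t)⁻¹ :=
    intervalIntegral.intervalIntegral_pos_of_pos hiv (fun t => inv_pos.2 (hw t)) hab
  have := CSw w (fun _ => 1) hw a b hab.le intervalIntegrable_const
    (by simpa using hiw) (by simpa using hiv) (by simpa using h1) (by simpa using h2)
    (fun _ => zero_le_one)
  simpa using this

lemma mass (M : ℝ) (hM : 1 ≤ M) (v : ℝ → ℝ) (hv : ∀ t, 0 < v t)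
    (hper : Function.Periodic v (2 * π))
    (hiv : ∀ a b : ℝ, IntervalIntegrable v volume a b)
    (hivi : ∀ a b : ℝ, IntervalIntegrable (fun t => (v t)⁻¹) volume a b)
    (hA2 : ∀ a ℓ : ℝ, 0 < ℓ → ℓ ≤ 2 * π →
      (∫ t in a..a + ℓ, v t) * (∫ t in a..a + ℓ, (v t)⁻¹) ≤ M * ℓ ^ 2) :
    ∀ (k : ℕ) (a : ℝ),
      (∫ t in a..a + 2 * π / 2 ^ k, v t) ≤ (1 - 1 / (4 * M)) ^ k * ∫ t in (0:ℝ)..(2*π), v t := by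
  have hMpos : (0:ℝ) < M := lt_of_lt_of_le one_pos hM
  have hγ0 : (0:ℝ) < 1 - 1 / (4 * M) := by
    have : 1 / (4 * M) ≤ 1 / 4 := by
      apply div_le_div_of_nonneg_left <;> linarith
    linarith
  intro k
  induction k with
  | zero =>
    intro a
    simp only [pow_zero, one_mul]
    rw [div_one]
    rw [hper.intervalIntegral_add_eq a 0, zero_add]
  | succ k ih =>
    intro a
    have h2k : (1:ℝ) ≤ 2 ^ k := one_le_pow₀ (by norm_num)
    set ℓ := 2 * π / 2 ^ k with hℓdef
    have hπ : 0 < π := Real.pi_pos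
    have hl : 0 < ℓ := by positivity
    have hl2 : ℓ ≤ 2 * π := by
      rw [hℓdef, div_le_iff₀ (by positivity)]
      nlinarith
    have hhalf : 2 * π / 2 ^ (k + 1) = ℓ / 2 := by
      rw [hℓdef, pow_succ]; ring
    rw [hhalf]
    set X := ∫ t in a..a + ℓ, v t with hX
    set Y := ∫ t in a..a + ℓ, (v t)⁻¹ with hY
    set L := ∫ t in a..a + ℓ / 2, v t with hL
    set h := ∫ t in (a + ℓ / 2)..(a + ℓ), v t with hh
    have hXpos : 0 < X := intervalIntegral.intervalIntegral_pos_of_pos (hiv _ _) hv (by linarith)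
    have hYpos : 0 < Y := intervalIntegral.intervalIntegral_pos_of_pos (hivi _ _)
      (fun t => inv_pos.2 (hv t)) (by linarith)
    have hhpos : 0 < h := intervalIntegral.intervalIntegral_pos_of_pos (hiv _ _) hv (by linarith)
    have hsplit : L + h = X := intervalIntegral.integral_add_adjacent_intervals (hiv _ _) (hiv _ _)
    have hCS : (ℓ / 2) ^ 2 ≤ h * ∫ t in (a + ℓ / 2)..(a + ℓ), (v t)⁻¹ := by
      have := CSint v hv (a + ℓ / 2) (a + ℓ) (by linarith) (hiv _ _) (hivi _ _)
      have he : (a + ℓ) - (a + ℓ / 2) = ℓ / 2 := by ring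
      rw [he] at this
      exact this
    have hYh : (∫ t in (a + ℓ / 2)..(a + ℓ), (v t)⁻¹) ≤ Y := by
      have hs : (∫ t in a..(a + ℓ / 2), (v t)⁻¹) + (∫ t in (a + ℓ / 2)..(a + ℓ), (v t)⁻¹) = Y :=
        intervalIntegral.integral_add_adjacent_intervals (hivi _ _) (hivi _ _)
      have hnn : 0 ≤ ∫ t in a..(a + ℓ / 2), (v t)⁻¹ :=
        intervalIntegral.integral_nonneg (by linarith) (fun u _ => (inv_pos.2 (hv u)).le)
      linarith
    have hA2' := hA2 a ℓ hl hl2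
    have hkey : X ≤ 4 * M * h := by
      have h1 : (ℓ / 2) ^ 2 ≤ h * Y := le_trans hCS (by nlinarith)
      nlinarith [mul_le_mul_of_nonneg_right h1 hXpos.le,
        mul_le_mul_of_nonneg_left hA2' hhpos.le]
    have hLX : L ≤ (1 - 1 / (4 * M)) * X := by
      have : X / (4 * M) ≤ h := by
        rw [div_le_iff₀ (by positivity)]
        nlinarith
      have e : (1 - 1 / (4 * M)) * X = X - X / (4 * M) := by field_simp
      linarith [hsplit, e]
    calc L ≤ (1 - 1 / (4 * M)) * X := hLX
      _ ≤ (1 - 1 / (4 * M)) * ((1 - 1 / (4 * M)) ^ k * ∫ t in (0:ℝ)..(2*π), v t) :=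
          mul_le_mul_of_nonneg_left (ih a) hγ0.le
      _ = (1 - 1 / (4 * M)) ^ (k + 1) * ∫ t in (0:ℝ)..(2*π), v t := by ring

lemma near4 {r : ℝ} (h0 : 0 ≤ r) (h1 : r < 1) (s : ℝ) :
    (1 - r ^ 2) * ((1 - r ^ 2) / (1 - 2 * r * Real.cos s + r ^ 2)) ≤ 4 := by
  have hD : 0 < 1 - 2 * r * Real.cos s + r ^ 2 := by
    nlinarith [Real.cos_le_one s, sq_nonneg (1 - r)]
  rw [mul_div_assoc', div_le_iff₀ hD]
  nlinarith [mul_nonneg (mul_nonneg (sub_nonneg.2 h1.le) (by linarith : (0:ℝ) ≤ 3 + r))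
      (sq_nonneg (1 - r)),
    mul_nonneg h0 (sub_nonneg.2 (Real.cos_le_one s))]

lemma farB {r s δ : ℝ} (hr : 1 / 2 ≤ r) (h1 : r < 1) (hδ : 0 < δ) (hsl : δ ≤ |s|)
    (hsu : |s| ≤ π) :
    (1 - r ^ 2) * ((1 - r ^ 2) / (1 - 2 * r * Real.cos s + r ^ 2))
      ≤ (1 - r ^ 2) ^ 2 * π ^ 2 / (2 * δ ^ 2) := by
  have hπ := Real.pi_pos
  have h0 : (0:ℝ) ≤ r := by linarith
  have hcos : Real.cos s ≤ 1 - 2 / π ^ 2 * s ^ 2 := Real.cos_le_one_sub_mul_cos_sq hsu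
  have hs2 : δ ^ 2 ≤ s ^ 2 := by
    have := mul_self_le_mul_self hδ.le hsl
    simpa [← sq_abs s, sq] using this
  have hD : 2 / π ^ 2 * δ ^ 2 ≤ 1 - 2 * r * Real.cos s + r ^ 2 := by
    have h2r : 1 ≤ 2 * r := by linarith
    have hq : 2 / π ^ 2 * δ ^ 2 ≤ 2 * r * (2 / π ^ 2 * s ^ 2) := by
      have e1 : 2 / π ^ 2 * δ ^ 2 ≤ 2 / π ^ 2 * s ^ 2 := by
        apply mul_le_mul_of_nonneg_left hs2 (by positivity)
      nlinarith [mul_le_mul_of_nonneg_right h2r (le_of_lt (show (0:ℝ) < 2 / π ^ 2 * δ ^ 2 by positivity)), sq_nonneg s]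
    nlinarith [sq_nonneg (1 - r)]
  have hDpos : 0 < 2 / π ^ 2 * δ ^ 2 := by positivity
  have hnum : (0:ℝ) ≤ (1 - r ^ 2) * (1 - r ^ 2) := by nlinarith
  calc (1 - r ^ 2) * ((1 - r ^ 2) / (1 - 2 * r * Real.cos s + r ^ 2))
      = (1 - r ^ 2) * (1 - r ^ 2) / (1 - 2 * r * Real.cos s + r ^ 2) := by rw [mul_div_assoc']
    _ ≤ (1 - r ^ 2) * (1 - r ^ 2) / (2 / π ^ 2 * δ ^ 2) :=
        div_le_div_of_nonneg_left hnum hDpos hD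
    _ = (1 - r ^ 2) ^ 2 * π ^ 2 / (2 * δ ^ 2) := by
        rw [sq (1 - r ^2)]; field_simp
  
lemma nearLow {r s : ℝ} (h0 : 0 ≤ r) (h1 : r < 1) (hs : |s| ≤ 1 - r) :
    1 / (2 * (1 - r)) ≤ (1 - r ^ 2) / (1 - 2 * r * Real.cos s + r ^ 2) := by
  have hD : 0 < 1 - 2 * r * Real.cos s + r ^ 2 := by
    nlinarith [Real.cos_le_one s, sq_nonneg (1 - r)]
  have hs2 : s ^ 2 ≤ (1 - r) ^ 2 := by
    have := mul_self_le_mul_self (abs_nonneg s) hs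
    simpa [← sq_abs s, sq] using this
  have hcos : 1 - s ^ 2 / 2 ≤ Real.cos s := Real.one_sub_sq_div_two_le_cos
  rw [div_le_div_iff₀ (by linarith) hD]
  nlinarith [mul_le_mul_of_nonneg_left hcos h0, sq_nonneg s, mul_nonneg h0 (sq_nonneg s)]

noncomputable def Kfn (s : ℝ) : ℕ := Nat.floor (Real.logb 4 (1 - s)⁻¹)

noncomputable def alphaF (M : ℝ) : ℝ → ℝ := fun s =>
  if s < 1 / 2 then (2 * π) ^ 2 * M * 4
  else (2 * π) ^ 2 * M *
    (4 * (1 - 1 / (4 * M)) ^ Kfn s + (1 - s ^ 2) ^ 2 * 4 ^ Kfn s)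

lemma gamma_pos {M : ℝ} (hM : 1 ≤ M) : 0 < 1 - 1 / (4 * M) := by
  have h : 1 / (4 * M) ≤ 1 / 4 := by
    apply div_le_div_of_nonneg_left <;> linarith
  linarith

lemma gamma_lt_one {M : ℝ} (hM : 1 ≤ M) : 1 - 1 / (4 * M) < 1 := by
  have : 0 < 1 / (4 * M) := by positivity
  linarith

lemma alphaF_pos {M : ℝ} (hM : 1 ≤ M) : ∀ t ∈ Set.Ico (0:ℝ) 1, 0 < alphaF M t := by
  intro t _
  have hπ := Real.pi_pos
  unfold alphaF
  split_ifs
  · positivity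
  · have hγ := gamma_pos hM
    have h1 : 0 < 4 * (1 - 1 / (4 * M)) ^ Kfn t := by positivity
    have h2 : 0 ≤ (1 - t ^ 2) ^ 2 * 4 ^ Kfn t := by positivity
    have : (0:ℝ) < (2 * π) ^ 2 * M := by positivity
    nlinarith

lemma Kfn_tendsto : Tendsto Kfn (nhdsWithin 1 (Set.Iio 1)) atTop := by
  unfold Kfn
  apply tendsto_nat_floor_atTop.comp
  apply (Real.tendsto_logb_atTop (by norm_num : (1:ℝ) < 4)).comp
  apply tendsto_inv_nhdsGT_zero.comp
  rw [tendsto_nhdsWithin_iff]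
  constructor
  · have h0 : Tendsto (fun s : ℝ => 1 - s) (nhds 1) (nhds 0) := by
      have hc : Continuous fun s : ℝ => 1 - s := continuous_const.sub continuous_id
      simpa using hc.tendsto (1:ℝ)
    exact h0.mono_left nhdsWithin_le_nhds
  · filter_upwards [self_mem_nhdsWithin] with s hs
    simp only [Set.mem_Iio] at hs
    simp [Set.mem_Ioi]; linarith

lemma alphaF_tendsto {M : ℝ} (hM : 1 ≤ M) :
    Tendsto (alphaF M) (nhdsWithin 1 (Set.Iio 1)) (nhds 0) := by
  have hγ0 := gamma_pos hM
  have hγ1 := gamma_lt_one hM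
  have hπ := Real.pi_pos
  have hmem : ∀ᶠ s in nhdsWithin 1 (Set.Iio 1), (1/2 : ℝ) < s ∧ s < 1 := by
    filter_upwards [self_mem_nhdsWithin,
      eventually_nhdsWithin_of_eventually_nhds (eventually_gt_nhds (by norm_num : (1/2:ℝ) < 1))]
      with s h1 h2
    exact ⟨h2, h1⟩
  -- term 1
  have hT1 : Tendsto (fun s => (2 * π) ^ 2 * M * (4 * (1 - 1 / (4 * M)) ^ Kfn s))
      (nhdsWithin 1 (Set.Iio 1)) (nhds 0) := by
    have h := (tendsto_pow_atTop_nhds_zero_of_lt_one hγ0.le hγ1).comp Kfn_tendsto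
    have h2 := (h.const_mul ((2 * π) ^ 2 * M * 4))
    simp only [mul_zero] at h2
    exact h2.congr fun s => by simp [Function.comp]; ring
  -- term 2
  have hT2 : Tendsto (fun s => (2 * π) ^ 2 * M * ((1 - s ^ 2) ^ 2 * 4 ^ Kfn s))
      (nhdsWithin 1 (Set.Iio 1)) (nhds 0) := by
    apply squeeze_zero'
    · filter_upwards [hmem] with s hs
      have : (0:ℝ) ≤ (1 - s ^ 2) ^ 2 * 4 ^ Kfn s := by positivity
      positivity
    · filter_upwards [hmem] with s hs
      have h1s : 0 < 1 - s := by linarith [hs.2]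
      have hx1 : (1:ℝ) ≤ (1 - s)⁻¹ := by
        rw [le_inv_comm₀] <;> linarith [hs.1]
      have hKle : (Kfn s : ℝ) ≤ Real.logb 4 (1 - s)⁻¹ :=
        Nat.floor_le (Real.logb_nonneg (by norm_num) hx1)
      have h4K : (4:ℝ) ^ Kfn s ≤ (1 - s)⁻¹ := by
        calc (4:ℝ) ^ Kfn s = (4:ℝ) ^ (Kfn s : ℝ) := by
              rw [Real.rpow_natCast]
          _ ≤ (4:ℝ) ^ Real.logb 4 (1 - s)⁻¹ :=
              Real.rpow_le_rpow_of_exponent_le (by norm_num) hKle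
          _ = (1 - s)⁻¹ := Real.rpow_logb (by norm_num) (by norm_num) (by positivity)
      have hbound : (2 * π) ^ 2 * M * ((1 - s ^ 2) ^ 2 * 4 ^ Kfn s)
          ≤ (2 * π) ^ 2 * M * (4 * (1 - s)) := by
        have hs1 : (1 - s ^ 2) ^ 2 * 4 ^ Kfn s ≤ (1 - s ^ 2) ^ 2 * (1 - s)⁻¹ :=
          mul_le_mul_of_nonneg_left h4K (by positivity)
        have he : (1 - s ^ 2) ^ 2 * (1 - s)⁻¹ = (1 + s) ^ 2 * (1 - s) := by
          field_simp
          ring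
        have hb2 : (1 + s) ^ 2 * (1 - s) ≤ 4 * (1 - s) := by
          nlinarith [hs.1, hs.2, h1s]
        have : (1 - s ^ 2) ^ 2 * 4 ^ Kfn s ≤ 4 * (1 - s) := by
          rw [he] at hs1
          linarith
        apply mul_le_mul_of_nonneg_left this (by positivity)
      exact hbound
    · have : Tendsto (fun s : ℝ => (2 * π) ^ 2 * M * (4 * (1 - s)))
          (nhds 1) (nhds ((2 * π) ^ 2 * M * (4 * (1 - 1)))) := by
        apply Tendsto.const_mul
        apply Tendsto.const_mul
        exact ((continuous_const.sub continuous_id : Continuous fun s : ℝ => 1 - s)).tendsto 1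
      simpa using this.mono_left nhdsWithin_le_nhds
  have hsum := hT1.add hT2
  simp only [add_zero] at hsum
  apply hsum.congr'
  filter_upwards [hmem] with s hs
  rw [alphaF, if_neg (by linarith [hs.1])]
  ring

end Stmt9Aux

set_option maxHeartbeats 1600000 in
/-- the Poisson extension of a scalar `A₂` weight with constant at most
`M` cannot decay too fast: `(1-|λ|²) w(0) / w(λ) ≤ α_M(|λ|) → 0`. -/
theorem stmt9 (M : ℝ) (hM : 1 ≤ M) :
    ∃ α : ℝ → ℝ,
      (∀ t ∈ Set.Ico (0:ℝ) 1, 0 < α t) ∧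
      Filter.Tendsto α (nhdsWithin 1 (Set.Iio 1)) (nhds 0) ∧
      ∀ w : ℝ → ℝ, (∀ t, 0 < w t) → Function.Periodic w (2 * π) →
        (∀ a b : ℝ, IntervalIntegrable w volume a b) →
        (∀ a b : ℝ, IntervalIntegrable (fun t => (w t)⁻¹) volume a b) →
        (∀ c ℓ : ℝ, 0 < ℓ → ℓ ≤ 2 * π →
          avg w (c - ℓ / 2) ℓ * avg (fun t => (w t)⁻¹) (c - ℓ / 2) ℓ ≤ M) →
        ∀ l : ℂ, ‖l‖ < 1 →
          (1 - ‖l‖ ^ 2) * pext w 0 / pext w l ≤ α ‖l‖ := by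
  refine ⟨alphaF M, alphaF_pos hM, alphaF_tendsto hM, ?_⟩
  intro w hw hper hiw hivI hA2 l hl
  have hπ := Real.pi_pos
  have hπ3 := Real.pi_gt_three
  set r := ‖l‖ with hrdef
  set θ := Complex.arg l with hθdef
  have hr0 : 0 ≤ r := norm_nonneg l
  have hr1 : r < 1 := hl
  set v : ℝ → ℝ := fun t => (w t)⁻¹ with hvdef
  have hv : ∀ t, 0 < v t := fun t => inv_pos.2 (hw t)
  have hperv : Function.Periodic v (2 * π) := fun t => by
    simp only [hvdef]; rw [hper t]
  have hivv : ∀ a b : ℝ, IntervalIntegrable v volume a b := hivI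
  have hivvi : ∀ a b : ℝ, IntervalIntegrable (fun t => (v t)⁻¹) volume a b := by
    intro a b
    simp only [hvdef, inv_inv]
    exact hiw a b
  have hA2v : ∀ a ℓ : ℝ, 0 < ℓ → ℓ ≤ 2 * π →
      (∫ t in a..a + ℓ, v t) * (∫ t in a..a + ℓ, (v t)⁻¹) ≤ M * ℓ ^ 2 := by
    intro a ℓ hp hle
    have h := hA2 (a + ℓ / 2) ℓ hp hle
    rw [show a + ℓ / 2 - ℓ / 2 = a by ring] at h
    unfold avg at h
    have e1 : (∫ t in a..a + ℓ, (v t)⁻¹) = ∫ t in a..a + ℓ, w t := by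
      simp only [hvdef, inv_inv]
    rw [e1]
    rw [div_mul_div_comm, div_le_iff₀ (by positivity)] at h
    calc (∫ t in a..a + ℓ, v t) * ∫ t in a..a + ℓ, w t
        = (∫ t in a..a + ℓ, w t) * ∫ t in a..a + ℓ, v t := mul_comm _ _
      _ ≤ M * (ℓ * ℓ) := h
      _ = M * ℓ ^ 2 := by ring
  -- Poisson kernel facts
  have hPc : Continuous (poissonKer l) := poissonKer_continuous hl
  have hPpos : ∀ t, 0 < poissonKer l t := poissonKer_pos hl
  have hiP : ∀ a b : ℝ, IntervalIntegrable (poissonKer l) volume a b :=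
    fun a b => hPc.intervalIntegrable a b
  have hiwP : ∀ a b : ℝ, IntervalIntegrable (fun t => w t * poissonKer l t) volume a b :=
    fun a b => (hiw a b).mul_continuousOn hPc.continuousOn
  have hivP : ∀ a b : ℝ, IntervalIntegrable (fun t => v t * poissonKer l t) volume a b :=
    fun a b => (hivv a b).mul_continuousOn hPc.continuousOn
  have hperP := poissonKer_periodic l
  have hperwP : Function.Periodic (fun t => w t * poissonKer l t) (2 * π) := fun t => by
    simp only []; rw [hper t, hperP t]
  have hpervP : Function.Periodic (fun t => v t * poissonKer l t) (2 * π) := fun t => by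
    simp only []; rw [hperv t, hperP t]
  -- shifts
  have shiftW : (∫ t in (θ - π)..(θ + π), w t * poissonKer l t)
      = ∫ t in (0:ℝ)..(2 * π), w t * poissonKer l t := by
    have h := hperwP.intervalIntegral_add_eq (θ - π) 0
    rw [zero_add] at h
    rw [show θ + π = θ - π + 2 * π by ring]
    exact h
  have shiftVP : (∫ t in (θ - π)..(θ + π), v t * poissonKer l t)
      = ∫ t in (0:ℝ)..(2 * π), v t * poissonKer l t := by
    have h := hpervP.intervalIntegral_add_eq (θ - π) 0
    rw [zero_add] at h
    rw [show θ + π = θ - π + 2 * π by ring]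
    exact h
  have shiftV : (∫ t in (θ - π)..(θ + π), v t) = ∫ t in (0:ℝ)..(2 * π), v t := by
    have h := hperv.intervalIntegral_add_eq (θ - π) 0
    rw [zero_add] at h
    rw [show θ + π = θ - π + 2 * π by ring]
    exact h
  set AW := ∫ t in (θ - π)..(θ + π), w t * poissonKer l t with hAWdef
  set AV := ∫ t in (θ - π)..(θ + π), v t * poissonKer l t with hAVdef
  set W0 := ∫ t in (0:ℝ)..(2 * π), w t with hW0def
  set V0 := ∫ t in (0:ℝ)..(2 * π), v t with hV0def
  have hab : θ - π < θ + π := by linarith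
  have hAWpos : 0 < AW := intervalIntegral.intervalIntegral_pos_of_pos (hiwP _ _)
    (fun t => mul_pos (hw t) (hPpos t)) hab
  have hAVpos : 0 < AV := intervalIntegral.intervalIntegral_pos_of_pos (hivP _ _)
    (fun t => mul_pos (hv t) (hPpos t)) hab
  have hW0pos : 0 < W0 := intervalIntegral.intervalIntegral_pos_of_pos (hiw _ _) hw (by linarith)
  have hV0pos : 0 < V0 := intervalIntegral.intervalIntegral_pos_of_pos (hivv _ _) hv (by linarith)
  -- pext values
  have hpext0 : pext w 0 = (2 * π)⁻¹ * W0 := by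
    unfold pext
    congr 1
    rw [hW0def]
    apply intervalIntegral.integral_congr
    intro t _
    simp [poissonKer]
  have hpextl : pext w l = (2 * π)⁻¹ * AW := by
    unfold pext
    rw [← shiftW, hAWdef]
  -- Step A : 1 ≤ AW * AV
  have hS1 : (1:ℝ) ≤ ∫ t in (θ - π)..(θ + π), poissonKer l t := by
    have h1r : 0 < 1 - r := by linarith
    have hsub1 : θ - π ≤ θ - (1 - r) := by linarith
    have hsub2 : θ - (1 - r) ≤ θ + (1 - r) := by linarith
    have hsub3 : θ + (1 - r) ≤ θ + π := by linarith
    have hlow : (1:ℝ) ≤ ∫ t in (θ - (1 - r))..(θ + (1 - r)), poissonKer l t := by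
      have hmono := intervalIntegral.integral_mono_on hsub2
        (intervalIntegrable_const (c := 1 / (2 * (1 - r)))) (hiP _ _)
        (fun t ht => by
          rw [poissonKer_eq]
          exact nearLow hr0 hr1 (abs_le.2 ⟨by linarith [ht.1], by linarith [ht.2]⟩))
      rw [intervalIntegral.integral_const, smul_eq_mul] at hmono
      have he : (θ + (1 - r) - (θ - (1 - r))) * (1 / (2 * (1 - r))) = 1 := by
        field_simp
        ring
      linarith only [he ▸ hmono]
    have e1 : (∫ t in (θ - π)..(θ - (1 - r)), poissonKer l t)
        + (∫ t in (θ - (1 - r))..(θ + π), poissonKer l t)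
        = ∫ t in (θ - π)..(θ + π), poissonKer l t :=
      intervalIntegral.integral_add_adjacent_intervals (hiP _ _) (hiP _ _)
    have e2 : (∫ t in (θ - (1 - r))..(θ + (1 - r)), poissonKer l t)
        + (∫ t in (θ + (1 - r))..(θ + π), poissonKer l t)
        = ∫ t in (θ - (1 - r))..(θ + π), poissonKer l t :=
      intervalIntegral.integral_add_adjacent_intervals (hiP _ _) (hiP _ _)
    have n1 : 0 ≤ ∫ t in (θ - π)..(θ - (1 - r)), poissonKer l t :=
      intervalIntegral.integral_nonneg hsub1 (fun u _ => (hPpos u).le)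
    have n2 : 0 ≤ ∫ t in (θ + (1 - r))..(θ + π), poissonKer l t :=
      intervalIntegral.integral_nonneg hsub3 (fun u _ => (hPpos u).le)
    linarith only [hlow, e1, e2, n1, n2]
  have hCS := CSw w (poissonKer l) hw (θ - π) (θ + π) hab.le (hiP _ _) (hiwP _ _)
    (hivP _ _) hAWpos hAVpos (fun t => (hPpos t).le)
  have hAWAV : 1 ≤ AW * AV := by
    have h1 : (1:ℝ) ≤ (∫ t in (θ - π)..(θ + π), poissonKer l t) ^ 2 := one_le_pow₀ hS1
    linarith only [h1, hCS]
  -- Step B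
  have hB : V0 * W0 ≤ M * (2 * π) ^ 2 := by
    have h := hA2v 0 (2 * π) (by positivity) le_rfl
    rw [zero_add] at h
    have e1 : (∫ t in (0:ℝ)..(2 * π), (v t)⁻¹) = W0 := by
      rw [hW0def]; simp only [hvdef, inv_inv]
    rw [e1] at h
    exact h
  -- Step C
  obtain ⟨B, hBnn, hC, hα⟩ : ∃ B : ℝ, 0 ≤ B ∧ (1 - r ^ 2) * AV ≤ B * V0 ∧
      alphaF M r = (2 * π) ^ 2 * M * B := by
    by_cases hcase : r < 1 / 2
    · refine ⟨4, by norm_num, ?_, by simp only [alphaF]; rw [if_pos hcase]⟩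
      have hpt : ∀ t ∈ Set.Icc (θ - π) (θ + π),
          (1 - r ^ 2) * (v t * poissonKer l t) ≤ 4 * v t := by
        intro t _
        rw [poissonKer_eq]
        have h4 := near4 hr0 hr1 (t - θ)
        have := mul_le_mul_of_nonneg_left h4 (hv t).le
        calc (1 - r ^ 2) * (v t * ((1 - r ^ 2) /
              (1 - 2 * r * Real.cos (t - θ) + r ^ 2)))
            = v t * ((1 - r ^ 2) * ((1 - r ^ 2) /
              (1 - 2 * r * Real.cos (t - θ) + r ^ 2))) := by ring
          _ ≤ v t * 4 := this
          _ = 4 * v t := by ring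
      have hmono := intervalIntegral.integral_mono_on hab.le
        (((hivP (θ - π) (θ + π))).const_mul (1 - r ^ 2)) ((hivv _ _).const_mul 4) hpt
      rw [intervalIntegral.integral_const_mul, intervalIntegral.integral_const_mul] at hmono
      rw [← hAVdef] at hmono
      calc (1 - r ^ 2) * AV ≤ 4 * ∫ t in (θ - π)..(θ + π), v t := hmono
        _ = 4 * V0 := by rw [shiftV]
    · push_neg at hcase
      set k := Kfn r with hkdef
      set δ := π / 2 ^ k with hδdef
      have h2k : (1:ℝ) ≤ 2 ^ k := one_le_pow₀ (by norm_num)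
      have hδpos : 0 < δ := by positivity
      have hδle : δ ≤ π := by
        rw [hδdef, div_le_iff₀ (by positivity)]
        exact le_mul_of_one_le_right hπ.le h2k
      have h4k : ((2:ℝ) ^ k) ^ 2 = 4 ^ k := by
        rw [← pow_mul, mul_comm, pow_mul]
        norm_num
      have hδsq : (1 - r ^ 2) ^ 2 * π ^ 2 / (2 * δ ^ 2) = (1 - r ^ 2) ^ 2 * 4 ^ k / 2 := by
        rw [hδdef, div_pow, ← h4k]
        field_simp
      refine ⟨4 * (1 - 1 / (4 * M)) ^ k + (1 - r ^ 2) ^ 2 * 4 ^ k, ?_, ?_, ?_⟩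
      · have h1 : (0:ℝ) < (1 - 1 / (4 * M)) ^ k := pow_pos (gamma_pos hM) k
        have h2 : (0:ℝ) ≤ (1 - r ^ 2) ^ 2 * 4 ^ k := by positivity
        linarith only [h1, h2]
      · -- main estimate
        have hend : θ + δ = (θ - δ) + 2 * π / 2 ^ k := by rw [hδdef]; ring
        have hmass := mass M hM v hv hperv hivv hivvi hA2v k (θ - δ)
        rw [← hend] at hmass
        rw [← hV0def] at hmass
        -- split AV
        have hsub1 : θ - π ≤ θ - δ := by linarith
        have hsub2 : θ - δ ≤ θ + δ := by linarith
        have hsub3 : θ + δ ≤ θ + π := by linarith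
        -- near piece
        have hnear : (1 - r ^ 2) * (∫ t in (θ - δ)..(θ + δ), v t * poissonKer l t)
            ≤ 4 * ((1 - 1 / (4 * M)) ^ k * V0) := by
          have hpt : ∀ t ∈ Set.Icc (θ - δ) (θ + δ),
              (1 - r ^ 2) * (v t * poissonKer l t) ≤ 4 * v t := by
            intro t _
            rw [poissonKer_eq]
            have h4 := near4 hr0 hr1 (t - θ)
            have h5 := mul_le_mul_of_nonneg_left h4 (hv t).le
            calc (1 - r ^ 2) * (v t * ((1 - r ^ 2) /
                  (1 - 2 * r * Real.cos (t - θ) + r ^ 2)))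
                = v t * ((1 - r ^ 2) * ((1 - r ^ 2) /
                  (1 - 2 * r * Real.cos (t - θ) + r ^ 2))) := by ring
              _ ≤ v t * 4 := h5
              _ = 4 * v t := by ring
          have hmono := intervalIntegral.integral_mono_on hsub2
            ((hivP _ _).const_mul (1 - r ^ 2)) ((hivv _ _).const_mul 4) hpt
          rw [intervalIntegral.integral_const_mul, intervalIntegral.integral_const_mul] at hmono
          have h4m : (4:ℝ) * (∫ t in (θ - δ)..(θ + δ), v t)
              ≤ 4 * ((1 - 1 / (4 * M)) ^ k * V0) := by
            apply mul_le_mul_of_nonneg_left hmass (by norm_num)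
          linarith only [hmono, h4m]
        -- far pieces
        have hfarpt : ∀ t, δ ≤ |t - θ| → |t - θ| ≤ π →
            (1 - r ^ 2) * (v t * poissonKer l t) ≤ ((1 - r ^ 2) ^ 2 * 4 ^ k / 2) * v t := by
          intro t h1 h2
          rw [poissonKer_eq]
          have hf := farB hcase hr1 hδpos h1 h2
          rw [hδsq] at hf
          have h5 := mul_le_mul_of_nonneg_left hf (hv t).le
          calc (1 - r ^ 2) * (v t * ((1 - r ^ 2) /
                (1 - 2 * r * Real.cos (t - θ) + r ^ 2)))
              = v t * ((1 - r ^ 2) * ((1 - r ^ 2) /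
                (1 - 2 * r * Real.cos (t - θ) + r ^ 2))) := by ring
            _ ≤ v t * ((1 - r ^ 2) ^ 2 * 4 ^ k / 2) := h5
            _ = ((1 - r ^ 2) ^ 2 * 4 ^ k / 2) * v t := by ring
        have hVsplit1 : (∫ t in (θ - π)..(θ - δ), v t) + (∫ t in (θ - δ)..(θ + π), v t)
            = ∫ t in (θ - π)..(θ + π), v t :=
          intervalIntegral.integral_add_adjacent_intervals (hivv _ _) (hivv _ _)
        have hVsplit2 : (∫ t in (θ - δ)..(θ + δ), v t) + (∫ t in (θ + δ)..(θ + π), v t)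
            = ∫ t in (θ - δ)..(θ + π), v t :=
          intervalIntegral.integral_add_adjacent_intervals (hivv _ _) (hivv _ _)
        have hVnn1 : 0 ≤ ∫ t in (θ - π)..(θ - δ), v t :=
          intervalIntegral.integral_nonneg hsub1 (fun u _ => (hv u).le)
        have hVnn2 : 0 ≤ ∫ t in (θ - δ)..(θ + δ), v t :=
          intervalIntegral.integral_nonneg hsub2 (fun u _ => (hv u).le)
        have hVnn3 : 0 ≤ ∫ t in (θ + δ)..(θ + π), v t :=
          intervalIntegral.integral_nonneg hsub3 (fun u _ => (hv u).le)
        have hVfull : (∫ t in (θ - π)..(θ + π), v t) = V0 := shiftV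
        have hfar1 : (1 - r ^ 2) * (∫ t in (θ - π)..(θ - δ), v t * poissonKer l t)
            ≤ ((1 - r ^ 2) ^ 2 * 4 ^ k / 2) * V0 := by
          have hpt : ∀ t ∈ Set.Icc (θ - π) (θ - δ),
              (1 - r ^ 2) * (v t * poissonKer l t)
                ≤ ((1 - r ^ 2) ^ 2 * 4 ^ k / 2) * v t := by
            intro t ht
            apply hfarpt t
            · rw [abs_of_nonpos (by linarith [ht.2])]
              linarith [ht.2]
            · rw [abs_of_nonpos (by linarith [ht.2])]
              linarith [ht.1]
          have hmono := intervalIntegral.integral_mono_on hsub1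
            ((hivP _ _).const_mul (1 - r ^ 2))
            ((hivv _ _).const_mul ((1 - r ^ 2) ^ 2 * 4 ^ k / 2)) hpt
          rw [intervalIntegral.integral_const_mul, intervalIntegral.integral_const_mul] at hmono
          have hCnn : (0:ℝ) ≤ (1 - r ^ 2) ^ 2 * 4 ^ k / 2 := by positivity
          have hle : (∫ t in (θ - π)..(θ - δ), v t) ≤ V0 := by
            linarith only [hVsplit1, hVsplit2, hVnn2, hVnn3, hVfull]
          calc (1 - r ^ 2) * (∫ t in (θ - π)..(θ - δ), v t * poissonKer l t)
              ≤ ((1 - r ^ 2) ^ 2 * 4 ^ k / 2) * ∫ t in (θ - π)..(θ - δ), v t := hmono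
            _ ≤ ((1 - r ^ 2) ^ 2 * 4 ^ k / 2) * V0 := mul_le_mul_of_nonneg_left hle hCnn
        have hfar2 : (1 - r ^ 2) * (∫ t in (θ + δ)..(θ + π), v t * poissonKer l t)
            ≤ ((1 - r ^ 2) ^ 2 * 4 ^ k / 2) * V0 := by
          have hpt : ∀ t ∈ Set.Icc (θ + δ) (θ + π),
              (1 - r ^ 2) * (v t * poissonKer l t)
                ≤ ((1 - r ^ 2) ^ 2 * 4 ^ k / 2) * v t := by
            intro t ht
            apply hfarpt t
            · rw [abs_of_nonneg (by linarith [ht.1])]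
              linarith [ht.1]
            · rw [abs_of_nonneg (by linarith [ht.1])]
              linarith [ht.2]
          have hmono := intervalIntegral.integral_mono_on hsub3
            ((hivP _ _).const_mul (1 - r ^ 2))
            ((hivv _ _).const_mul ((1 - r ^ 2) ^ 2 * 4 ^ k / 2)) hpt
          rw [intervalIntegral.integral_const_mul, intervalIntegral.integral_const_mul] at hmono
          have hCnn : (0:ℝ) ≤ (1 - r ^ 2) ^ 2 * 4 ^ k / 2 := by positivity
          have hle : (∫ t in (θ + δ)..(θ + π), v t) ≤ V0 := by
            linarith only [hVsplit1, hVsplit2, hVnn1, hVnn2, hVfull]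
          calc (1 - r ^ 2) * (∫ t in (θ + δ)..(θ + π), v t * poissonKer l t)
              ≤ ((1 - r ^ 2) ^ 2 * 4 ^ k / 2) * ∫ t in (θ + δ)..(θ + π), v t := hmono
            _ ≤ ((1 - r ^ 2) ^ 2 * 4 ^ k / 2) * V0 := mul_le_mul_of_nonneg_left hle hCnn
        have hAVsplit1 : (∫ t in (θ - π)..(θ - δ), v t * poissonKer l t)
            + (∫ t in (θ - δ)..(θ + π), v t * poissonKer l t) = AV :=
          intervalIntegral.integral_add_adjacent_intervals (hivP _ _) (hivP _ _)
        have hAVsplit2 : (∫ t in (θ - δ)..(θ + δ), v t * poissonKer l t)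
            + (∫ t in (θ + δ)..(θ + π), v t * poissonKer l t)
            = ∫ t in (θ - δ)..(θ + π), v t * poissonKer l t :=
          intervalIntegral.integral_add_adjacent_intervals (hivP _ _) (hivP _ _)
        calc (1 - r ^ 2) * AV
            = (1 - r ^ 2) * (∫ t in (θ - π)..(θ - δ), v t * poissonKer l t)
              + (1 - r ^ 2) * (∫ t in (θ - δ)..(θ + δ), v t * poissonKer l t)
              + (1 - r ^ 2) * (∫ t in (θ + δ)..(θ + π), v t * poissonKer l t) := by
              rw [← hAVsplit1, ← hAVsplit2]; ring
          _ ≤ ((1 - r ^ 2) ^ 2 * 4 ^ k / 2) * V0 + 4 * ((1 - 1 / (4 * M)) ^ k * V0)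
              + ((1 - r ^ 2) ^ 2 * 4 ^ k / 2) * V0 := by
              linarith only [hfar1, hnear, hfar2]
          _ = (4 * (1 - 1 / (4 * M)) ^ k + (1 - r ^ 2) ^ 2 * 4 ^ k) * V0 := by ring
      · simp only [alphaF]
        rw [if_neg (not_lt.2 hcase), ← hkdef]
  -- final assembly
  have hαnn : (0:ℝ) ≤ (2 * π) ^ 2 * M * B :=
    mul_nonneg (by positivity) hBnn
  have key : (1 - r ^ 2) * W0 * AV ≤ ((2 * π) ^ 2 * M * B) * (AW * AV) := by
    calc (1 - r ^ 2) * W0 * AV = W0 * ((1 - r ^ 2) * AV) := by ring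
      _ ≤ W0 * (B * V0) := mul_le_mul_of_nonneg_left hC hW0pos.le
      _ = B * (V0 * W0) := by ring
      _ ≤ B * (M * (2 * π) ^ 2) := mul_le_mul_of_nonneg_left hB hBnn
      _ = ((2 * π) ^ 2 * M * B) * 1 := by ring
      _ ≤ ((2 * π) ^ 2 * M * B) * (AW * AV) := mul_le_mul_of_nonneg_left hAWAV hαnn
  have key2 : (1 - r ^ 2) * W0 ≤ ((2 * π) ^ 2 * M * B) * AW := by
    have h := key
    rw [show ((2 * π) ^ 2 * M * B) * (AW * AV) = (((2 * π) ^ 2 * M * B) * AW) * AV by ring] at h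
    exact le_of_mul_le_mul_right h hAVpos
  rw [hpext0, hpextl, hα, div_le_iff₀ (mul_pos (by positivity) hAWpos)]
  calc (1 - r ^ 2) * ((2 * π)⁻¹ * W0) = (2 * π)⁻¹ * ((1 - r ^ 2) * W0) := by ring
    _ ≤ (2 * π)⁻¹ * (((2 * π) ^ 2 * M * B) * AW) :=
        mul_le_mul_of_nonneg_left key2 (by positivity)
    _ = (2 * π) ^ 2 * M * B * ((2 * π)⁻¹ * AW) := by ring
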